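/- For any matrix A and any 1 ≤ i ≤ m, 1 ≤ j ≤ n, the row rank profile of the leading i×j submatrix of A equals the row support of the leading i×j submatrix of the rank profile matrix of A. -/

import Mathlib

open Matrix

/-- The leading `i×j` submatrix of a matrix. -/
def leadSub {K : Type*} [Field K] {m n : ℕ} (A : Matrix (Fin m) (Fin n) K) {i j : ℕ}
    (hi : i ≤ m) (hj : j ≤ n) : Matrix (Fin i) (Fin j) K :=
  A.submatrix (Fin.castLE hi) (Fin.castLE hj)

/-- An `r`-sub-permutation matrix: rank `r` with exactly `r` nonzero entries, all equal to 1. -/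
def IsSubPerm {K : Type*} [Field K] {m n : ℕ} (r : ℕ) (R : Matrix (Fin m) (Fin n) K) : Prop :=
  (∀ i j, R i j = 0 ∨ R i j = 1) ∧
  {p : Fin m × Fin n | R p.1 p.2 ≠ 0}.ncard = r ∧
  R.rank = r

/-- `R` is the rank profile matrix of `A`: the rank(A)-sub-permutation matrix each of whose
leading submatrices has the same rank as the corresponding leading submatrix of `A`. -/
def IsRPM {K : Type*} [Field K] {m n : ℕ} (A R : Matrix (Fin m) (Fin n) K) : Prop :=
  IsSubPerm A.rank R ∧
  ∀ (i j : ℕ) (hi : i ≤ m) (hj : j ≤ n),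
    (leadSub R hi hj).rank = (leadSub A hi hj).rank

/-- `S` is the row rank profile of `A`: the lexicographically smallest set of
`rank A` indices of linearly independent rows of `A`. -/
def IsRowRP {K : Type*} [Field K] {m n : ℕ} (A : Matrix (Fin m) (Fin n) K)
    (S : Finset (Fin m)) : Prop :=
  S.card = A.rank ∧ LinearIndependent K (fun i : S => A i) ∧
  ∀ T : Finset (Fin m), T.card = A.rank → LinearIndependent K (fun i : T => A i) →
    S = T ∨ List.Lex (· < ·) (S.sort (· ≤ ·)) (T.sort (· ≤ ·))

open Classical in
/-- Row support: the set of indices of nonzero rows. -/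
noncomputable def rowSupp {K : Type*} [Field K] {m n : ℕ}
    (R : Matrix (Fin m) (Fin n) K) : Finset (Fin m) :=
  Finset.univ.filter fun i => ∃ j, R i j ≠ 0

/-- The m×n block matrix [[I_r, 0], [0, 0]]. -/
def Jb (K : Type*) [Field K] (m n r : ℕ) : Matrix (Fin m) (Fin n) K :=
  Matrix.of fun i j => if (i : ℕ) = (j : ℕ) ∧ (i : ℕ) < r then 1 else 0

/-- The pivoting matrix `Π_{P,Q} = P [[I_r,0],[0,0]] Q` of a PLUQ decomposition of rank r. -/
noncomputable def PivMat (K : Type*) [Field K] {m n : ℕ}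
    (σ : Equiv.Perm (Fin m)) (τ : Equiv.Perm (Fin n)) (r : ℕ) : Matrix (Fin m) (Fin n) K :=
  σ.permMatrix K * Jb K m n r * τ.permMatrix K

/-- A permutation of `Fin n` is `k`-monotonically increasing if its last `n-k`
values form a strictly increasing sequence. -/
def MonoInc {n : ℕ} (k : ℕ) (σ : Equiv.Perm (Fin n)) : Prop :=
  ∀ a b : Fin n, k ≤ (a : ℕ) → a < b → σ a < σ b

/-!
Let `S` be the row support of the leading `i × j` block of `R`. Since `R` has exactly `rank R`
nonzero entries, no column of `R` holds two of them, so the rank of any block of `R` is its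
number of nonzero rows. Through the rank profile property, the first `t` rows of the block of
`A` therefore have rank `#{p ∈ S | p < t}` for every `t`. Such an `S` is the row rank profile:
a row outside `S` does not raise the rank of the rows above it, so the rows in `S` span the row
space and are independent; and an independent set `T` of rows has at most `#{p ∈ S | p ≤ b}`
elements `≤ b` for every `b`, which makes `S` lexicographically smallest.
-/

open Module Submodule Finset Function

theorem Finset.eq_or_lex_sort_of_card_filter_le {α : Type*} [LinearOrder α] (S : Finset α) :
    ∀ T : Finset α, #S = #T → (∀ b, #{x ∈ T | x ≤ b} ≤ #{x ∈ S | x ≤ b}) →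
      S = T ∨ List.Lex (· < ·) (S.sort (· ≤ ·)) (T.sort (· ≤ ·)) := by
  induction S using Finset.induction_on_min with
  | empty => exact fun T hcard _ => .inl (card_eq_zero.1 hcard.symm).symm
  | insert a S haS ih =>
    intro T hcard hle
    have ha : a ∉ S := fun h => lt_irrefl a (haS a h)
    induction T using Finset.induction_on_min with
    | empty => simp at hcard
    | insert c T hcT _ =>
      have hc : c ∉ T := fun h => lt_irrefl c (hcT c h)
      rw [sort_insert _ (fun x hx => (haS x hx).le) ha,
        sort_insert _ (fun x hx => (hcT x hx).le) hc]
      have hac : a ≤ c := by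
        have hcc : 0 < #{x ∈ insert c T | x ≤ c} := card_pos.2 ⟨c, by simp⟩
        obtain ⟨x, hx⟩ := card_pos.1 (hcc.trans_le (hle c))
        rw [mem_filter, mem_insert] at hx
        rcases hx with ⟨rfl | hxS, hxc⟩
        · exact hxc
        · exact (haS x hxS).le.trans hxc
      rcases hac.lt_or_eq with hlt | rfl
      · exact .inr (.rel hlt)
      · have hcount : ∀ b, #{x ∈ T | x ≤ b} ≤ #{x ∈ S | x ≤ b} := by
          intro b
          have := hle b
          simp only [filter_insert] at this
          split_ifs at this <;> simpa [card_insert_of_notMem, ha, hc] using this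
        rcases ih T (by simpa [ha, hc] using hcard) hcount with rfl | hlex
        · exact .inl rfl
        · exact .inr (.cons hlex)

theorem LinearIndepOn.card_le_finrank_span_image {K ι V : Type*} [DivisionRing K] [AddCommGroup V]
    [Module K V] [FiniteDimensional K V] {v : ι → V} {T : Finset ι} {s : Set ι}
    (hT : LinearIndepOn K v T) (hTs : ↑T ⊆ s) : #T ≤ finrank K (span K (v '' s)) :=
  calc #T = finrank K (span K (v '' T)) := by
        rw [Set.image_eq_range, finrank_span_eq_card hT]
        simp
    _ ≤ _ := Submodule.finrank_mono (span_mono (Set.image_mono hTs))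

theorem support_col_subsingleton_submatrix {R m m' n n' : Type*} [Zero R] {M : Matrix m n R}
    (hM : ∀ q, (support fun p => M p q).Subsingleton) {f : m' → m} (hf : f.Injective)
    (g : n' → n) (q : n') : (support fun p => M.submatrix f g p q).Subsingleton :=
  fun _ hp _ hp' => hf (hM (g q) hp hp')

section

variable {K : Type*} [Field K]

def prefixRowSpan {i : ℕ} {n : Type*} (M : Matrix (Fin i) n K) (t : ℕ) :
    Submodule K (n → K) :=
  span K (M.row '' {p | p.val < t})

theorem prefixRowSpan_mono {i : ℕ} {n : Type*} (M : Matrix (Fin i) n K) :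
    Monotone (prefixRowSpan M) :=
  fun _ _ hst => span_mono (Set.image_mono fun _ hp => lt_of_lt_of_le hp hst)

theorem finrank_prefixRowSpan {i t : ℕ} {n : Type*} [Fintype n] (M : Matrix (Fin i) n K)
    (ht : t ≤ i) : finrank K (prefixRowSpan M t) = (M.submatrix (Fin.castLE ht) id).rank := by
  have hrows : Set.range (M.submatrix (Fin.castLE ht) id).row = M.row '' {p | p.val < t} := by
    ext v
    constructor
    · rintro ⟨p, rfl⟩
      exact ⟨Fin.castLE ht p, p.isLt, rfl⟩
    · rintro ⟨p, hp, rfl⟩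
      exact ⟨⟨p, hp⟩, rfl⟩
  rw [rank_eq_finrank_span_row, prefixRowSpan, hrows]

theorem row_mem_span_image_of_finrank_prefixRowSpan {i : ℕ} {n : Type*} [Finite n]
    (A : Matrix (Fin i) n K) {S : Finset (Fin i)}
    (hS : ∀ t ≤ i, finrank K (prefixRowSpan A t) = #{p ∈ S | p.val < t}) (q : Fin i) :
    A.row q ∈ span K (A.row '' S) := by
  induction q using WellFoundedLT.induction with
  | _ q ih =>
  by_cases hqS : q ∈ S
  · exact subset_span ⟨q, hqS, rfl⟩
  have hstall : prefixRowSpan A (q + 1) = prefixRowSpan A q := by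
    refine (eq_of_le_of_finrank_le (prefixRowSpan_mono A (Nat.le_succ _)) ?_).symm
    rw [hS (q + 1) q.isLt, hS q q.isLt.le]
    refine card_le_card fun p hp => ?_
    rw [mem_filter] at hp ⊢
    have hpq : p.val ≠ q.val := Fin.val_ne_of_ne (ne_of_mem_of_not_mem hp.1 hqS)
    exact ⟨hp.1, by omega⟩
  have hq : A.row q ∈ prefixRowSpan A q := hstall ▸ subset_span ⟨q, Nat.lt_succ_self _, rfl⟩
  exact span_le.2 (Set.image_subset_iff.2 fun p hp => ih p hp) hq

theorem isRowRP_of_finrank_prefixRowSpan {i j : ℕ} (A : Matrix (Fin i) (Fin j) K)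
    (S : Finset (Fin i))
    (hS : ∀ t ≤ i, finrank K (prefixRowSpan A t) = #{p ∈ S | p.val < t}) : IsRowRP A S := by
  have hcard : #S = A.rank := by
    have hall : prefixRowSpan A i = span K (Set.range A.row) := by simp [prefixRowSpan]
    rw [rank_eq_finrank_span_row, ← hall, hS i le_rfl, filter_true_of_mem fun p _ => p.isLt]
  have hli : LinearIndependent K (fun p : S => A p) := by
    rw [linearIndependent_iff_card_le_finrank_span, Fintype.card_coe, hcard,
      rank_eq_finrank_span_row]
    change _ ≤ finrank K (span K (Set.range fun p : (S : Set (Fin i)) => A.row p))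
    rw [← Set.image_eq_range]
    exact finrank_mono (span_le.2 (Set.range_subset_iff.2
      (row_mem_span_image_of_finrank_prefixRowSpan A hS)))
  refine ⟨hcard, hli, fun T hT hTli => ?_⟩
  refine eq_or_lex_sort_of_card_filter_le S T (hcard.trans hT.symm) fun b => ?_
  calc #{x ∈ T | x ≤ b} ≤ finrank K (prefixRowSpan A (b + 1)) :=
        LinearIndepOn.card_le_finrank_span_image
          (LinearIndepOn.mono hTli (coe_subset.2 (filter_subset _ _)))
          fun p hp => Nat.lt_succ_of_le (mem_filter.1 hp).2
    _ = #{x ∈ S | x ≤ b} := by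
        rw [hS _ b.isLt]
        simp only [Nat.lt_add_one_iff, Fin.le_def]

theorem mem_rowSupp {m n : ℕ} {M : Matrix (Fin m) (Fin n) K} {p : Fin m} :
    p ∈ rowSupp M ↔ ∃ q, M p q ≠ 0 := by
  simp [rowSupp]

theorem rank_le_card_rowSupp {m n : ℕ} (M : Matrix (Fin m) (Fin n) K) :
    M.rank ≤ #(rowSupp M) := by
  have hspan : span K (Set.range M.row) ≤ span K (M.row '' rowSupp M) := by
    refine span_le.2 (Set.range_subset_iff.2 fun p => ?_)
    by_cases hp : p ∈ rowSupp M
    · exact subset_span ⟨p, hp, rfl⟩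
    · simp only [mem_rowSupp, not_exists, not_not] at hp
      have : M.row p = 0 := funext hp
      simp [this]
  calc M.rank ≤ finrank K (span K (M.row '' rowSupp M)) := by
        rw [rank_eq_finrank_span_row]
        exact finrank_mono hspan
    _ ≤ #(rowSupp M) := by
        rw [Set.image_eq_range]
        exact (finrank_range_le_card (R := K) fun p : rowSupp M => M.row p).trans_eq
          (Fintype.card_coe _)

theorem linearIndepOn_rowSupp {m n : ℕ} {M : Matrix (Fin m) (Fin n) K}
    (hM : ∀ q, (support fun p => M p q).Subsingleton) :
    LinearIndepOn K M.row (rowSupp M) := by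
  rw [LinearIndepOn, Fintype.linearIndependent_iff]
  intro g hg p
  obtain ⟨q, hq⟩ := mem_rowSupp.1 p.2
  have hgq := congrFun hg q
  simp only [Finset.sum_apply, Pi.smul_apply, Pi.zero_apply, smul_eq_mul] at hgq
  rw [Finset.sum_eq_single p (fun p' _ hp' => ?_) (by simp)] at hgq
  · exact (mul_eq_zero.1 hgq).resolve_right hq
  · have : M p' q = 0 := by
      by_contra h
      exact hp' (Subtype.ext (hM q h hq))
    simp [this]

theorem rank_eq_card_rowSupp {m n : ℕ} {M : Matrix (Fin m) (Fin n) K}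
    (hM : ∀ q, (support fun p => M p q).Subsingleton) :
    M.rank = #(rowSupp M) := by
  refine le_antisymm (rank_le_card_rowSupp M) ?_
  rw [rank_eq_finrank_span_row, ← Set.image_univ]
  exact (linearIndepOn_rowSupp hM).card_le_finrank_span_image (Set.subset_univ _)

theorem card_rowSupp_submatrix_castLE {i j t : ℕ} (M : Matrix (Fin i) (Fin j) K) (ht : t ≤ i) :
    #(rowSupp (M.submatrix (Fin.castLE ht) id)) = #{p ∈ rowSupp M | p.val < t} := by
  rw [← card_map (Fin.castLEEmb ht)]
  refine congrArg card (ext fun p => ?_)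
  simp only [mem_map, mem_filter, mem_rowSupp]
  constructor
  · rintro ⟨p', ⟨q, hq⟩, rfl⟩
    exact ⟨⟨q, hq⟩, p'.isLt⟩
  · rintro ⟨⟨q, hq⟩, hpt⟩
    exact ⟨⟨p, hpt⟩, ⟨q, hq⟩, rfl⟩

theorem IsSubPerm.support_col_subsingleton {m n r : ℕ} {R : Matrix (Fin m) (Fin n) K}
    (hR : IsSubPerm r R) (q : Fin n) : (support fun p => R p q).Subsingleton := by
  classical
  set N : Finset (Fin m × Fin n) := {x | R x.1 x.2 ≠ 0}
  have hN : #N = r := by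
    rw [← hR.2.1, ← Set.ncard_coe_finset]
    congr
    ext
    simp [N]
  have hcols : N.image Prod.snd = rowSupp Rᵀ := by
    ext q
    simp [N, mem_rowSupp]
  have hinj : Set.InjOn Prod.snd (N : Set (Fin m × Fin n)) := by
    refine injOn_of_card_image_eq (le_antisymm card_image_le ?_)
    calc #N = Rᵀ.rank := by rw [rank_transpose, hR.2.2, hN]
      _ ≤ _ := hcols ▸ rank_le_card_rowSupp Rᵀ
  intro p hp p' hp'
  have hpq : (p, q) ∈ (N : Set (Fin m × Fin n)) := by simpa [N] using hp
  have hpq' : (p', q) ∈ (N : Set (Fin m × Fin n)) := by simpa [N] using hp'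
  exact congrArg Prod.fst (hinj hpq hpq' rfl)

end

/-- the row rank profile of any leading submatrix of A is the row support of
the corresponding leading submatrix of the rank profile matrix of A. -/
theorem stmt6 {K : Type*} [Field K] {m n : ℕ} (A R : Matrix (Fin m) (Fin n) K)
    (hR : IsRPM A R) :
    ∀ (i j : ℕ) (hi : i ≤ m) (hj : j ≤ n),
      IsRowRP (leadSub A hi hj) (rowSupp (leadSub R hi hj)) := by
  intro i j hi hj
  have hcol : ∀ q, (support fun p => leadSub R hi hj p q).Subsingleton :=
    support_col_subsingleton_submatrix hR.1.support_col_subsingleton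
      (Fin.castLE_injective hi) (Fin.castLE hj)
  refine isRowRP_of_finrank_prefixRowSpan _ _ fun t ht => ?_
  calc finrank K (prefixRowSpan (leadSub A hi hj) t)
      = (leadSub A (ht.trans hi) hj).rank := finrank_prefixRowSpan _ ht
    _ = (leadSub R (ht.trans hi) hj).rank := (hR.2 t j (ht.trans hi) hj).symm
    _ = #(rowSupp ((leadSub R hi hj).submatrix (Fin.castLE ht) id)) :=
        rank_eq_card_rowSupp (support_col_subsingleton_submatrix hcol (Fin.castLE_injective ht) id)
    _ = #{p ∈ rowSupp (leadSub R hi hj) | p.val < t} := card_rowSupp_submatrix_castLE _ ht
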